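/- arXiv:2511.23381 — 5 statements merged into one kernel-verified Lean document; each statement's English description precedes it below -/
import Mathlib

section
/- Let p be an odd prime and k ≥ 1 an integer with p − 1 not dividing k, and let G be a subgroup of C_s(p). If some GL₂(𝔽_p)-conjugate of D^k is contained in G, then D^k ⊆ G or (D^k)_f ⊆ G. -/
open Matrix

abbrev GL2 (p : ℕ) := GL (Fin 2) (ZMod p)

/-- The subgroup `SL₂` of `GL₂(ℤ/nℤ)`, i.e. the kernel of the determinant. -/
def SL2sub (n : ℕ) : Subgroup (GL (Fin 2) (ZMod n)) :=
  (Matrix.GeneralLinearGroup.det : GL (Fin 2) (ZMod n) →* (ZMod n)ˣ).ker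

/-- The split Cartan subgroup: diagonal matrices in `GL₂(𝔽_p)`. -/
def Cs (p : ℕ) : Subgroup (GL2 p) where
  carrier := { g | (g : Matrix (Fin 2) (Fin 2) (ZMod p)) 0 1 = 0 ∧
      (g : Matrix (Fin 2) (Fin 2) (ZMod p)) 1 0 = 0 }
  one_mem' := by simp
  mul_mem' := by
    rintro a b ⟨ha1, ha2⟩ ⟨hb1, hb2⟩
    refine ⟨?_, ?_⟩ <;>
      simp [Units.val_mul, Matrix.mul_apply, Fin.sum_univ_two, ha1, ha2, hb1, hb2]
  inv_mem' := by
    rintro a ⟨h1, h2⟩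
    have h : ((a⁻¹ : GL2 p) : Matrix (Fin 2) (Fin 2) (ZMod p))
        = Ring.inverse ((a : Matrix (Fin 2) (Fin 2) (ZMod p)).det) •
          Matrix.adjugate (a : Matrix (Fin 2) (Fin 2) (ZMod p)) := by
      rw [Matrix.coe_units_inv, Matrix.inv_def]
    refine ⟨?_, ?_⟩ <;> simp [h, Matrix.adjugate_fin_two, h1, h2]

/-- The Borel subgroup: upper triangular matrices in `GL₂(𝔽_p)`. -/
def B0 (p : ℕ) : Subgroup (GL2 p) where
  carrier := { g | (g : Matrix (Fin 2) (Fin 2) (ZMod p)) 1 0 = 0 }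
  one_mem' := by simp
  mul_mem' := by
    intro a b ha hb
    simp only [Set.mem_setOf_eq] at *
    simp [Units.val_mul, Matrix.mul_apply, Fin.sum_univ_two, ha, hb]
  inv_mem' := by
    intro a h
    simp only [Set.mem_setOf_eq] at *
    have hh : ((a⁻¹ : GL2 p) : Matrix (Fin 2) (Fin 2) (ZMod p))
        = Ring.inverse ((a : Matrix (Fin 2) (Fin 2) (ZMod p)).det) •
          Matrix.adjugate (a : Matrix (Fin 2) (Fin 2) (ZMod p)) := by
      rw [Matrix.coe_units_inv, Matrix.inv_def]
    simp [hh, Matrix.adjugate_fin_two, h]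

/-- The subgroup of scalar matrices in `GL₂(𝔽_p)`. -/
def Zs (p : ℕ) : Subgroup (GL2 p) where
  carrier := { g | (g : Matrix (Fin 2) (Fin 2) (ZMod p)) 0 1 = 0 ∧
      (g : Matrix (Fin 2) (Fin 2) (ZMod p)) 1 0 = 0 ∧
      (g : Matrix (Fin 2) (Fin 2) (ZMod p)) 1 1 = (g : Matrix (Fin 2) (Fin 2) (ZMod p)) 0 0 }
  one_mem' := by simp
  mul_mem' := by
    rintro a b ⟨ha1, ha2, ha3⟩ ⟨hb1, hb2, hb3⟩
    refine ⟨?_, ?_, ?_⟩ <;>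
      simp [Units.val_mul, Matrix.mul_apply, Fin.sum_univ_two, ha1, ha2, ha3, hb1, hb2, hb3]
  inv_mem' := by
    rintro a ⟨h1, h2, h3⟩
    have hh : ((a⁻¹ : GL2 p) : Matrix (Fin 2) (Fin 2) (ZMod p))
        = Ring.inverse ((a : Matrix (Fin 2) (Fin 2) (ZMod p)).det) •
          Matrix.adjugate (a : Matrix (Fin 2) (Fin 2) (ZMod p)) := by
      rw [Matrix.coe_units_inv, Matrix.inv_def]
    refine ⟨?_, ?_, ?_⟩ <;> simp [hh, Matrix.adjugate_fin_two, h1, h2, h3]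

/-- The normalizer of the split Cartan subgroup: diagonal and antidiagonal matrices. -/
def Ns (p : ℕ) : Subgroup (GL2 p) where
  carrier := { g | ((g : Matrix (Fin 2) (Fin 2) (ZMod p)) 0 1 = 0 ∧
      (g : Matrix (Fin 2) (Fin 2) (ZMod p)) 1 0 = 0) ∨
      ((g : Matrix (Fin 2) (Fin 2) (ZMod p)) 0 0 = 0 ∧
      (g : Matrix (Fin 2) (Fin 2) (ZMod p)) 1 1 = 0) }
  one_mem' := by simp
  mul_mem' := by
    rintro a b (⟨ha1, ha2⟩ | ⟨ha1, ha2⟩) (⟨hb1, hb2⟩ | ⟨hb1, hb2⟩)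
    · refine Or.inl ⟨?_, ?_⟩ <;>
        simp [Units.val_mul, Matrix.mul_apply, Fin.sum_univ_two, ha1, ha2, hb1, hb2]
    · refine Or.inr ⟨?_, ?_⟩ <;>
        simp [Units.val_mul, Matrix.mul_apply, Fin.sum_univ_two, ha1, ha2, hb1, hb2]
    · refine Or.inr ⟨?_, ?_⟩ <;>
        simp [Units.val_mul, Matrix.mul_apply, Fin.sum_univ_two, ha1, ha2, hb1, hb2]
    · refine Or.inl ⟨?_, ?_⟩ <;>
        simp [Units.val_mul, Matrix.mul_apply, Fin.sum_univ_two, ha1, ha2, hb1, hb2]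
  inv_mem' := by
    intro a h
    have hh : ((a⁻¹ : GL2 p) : Matrix (Fin 2) (Fin 2) (ZMod p))
        = Ring.inverse ((a : Matrix (Fin 2) (Fin 2) (ZMod p)).det) •
          Matrix.adjugate (a : Matrix (Fin 2) (Fin 2) (ZMod p)) := by
      rw [Matrix.coe_units_inv, Matrix.inv_def]
    rcases h with ⟨h1, h2⟩ | ⟨h1, h2⟩
    · refine Or.inl ⟨?_, ?_⟩ <;> simp [hh, Matrix.adjugate_fin_two, h1, h2]
    · refine Or.inr ⟨?_, ?_⟩ <;> simp [hh, Matrix.adjugate_fin_two, h1, h2]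

/-- The nonsplit Cartan subgroup attached to a nonsquare `ε`:
invertible matrices of the form `[[a, bε], [b, a]]`. -/
def Cns (p : ℕ) (ε : ZMod p) : Subgroup (GL2 p) where
  carrier := { g | (g : Matrix (Fin 2) (Fin 2) (ZMod p)) 1 1 =
      (g : Matrix (Fin 2) (Fin 2) (ZMod p)) 0 0 ∧
      (g : Matrix (Fin 2) (Fin 2) (ZMod p)) 0 1 = ε * (g : Matrix (Fin 2) (Fin 2) (ZMod p)) 1 0 }
  one_mem' := by simp
  mul_mem' := by
    rintro a b ⟨ha1, ha2⟩ ⟨hb1, hb2⟩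
    refine ⟨?_, ?_⟩ <;>
      simp [Units.val_mul, Matrix.mul_apply, Fin.sum_univ_two, ha1, ha2, hb1, hb2] <;>
      try ring
  inv_mem' := by
    rintro a ⟨h1, h2⟩
    have hh : ((a⁻¹ : GL2 p) : Matrix (Fin 2) (Fin 2) (ZMod p))
        = Ring.inverse ((a : Matrix (Fin 2) (Fin 2) (ZMod p)).det) •
          Matrix.adjugate (a : Matrix (Fin 2) (Fin 2) (ZMod p)) := by
      rw [Matrix.coe_units_inv, Matrix.inv_def]
    refine ⟨?_, ?_⟩ <;> simp [hh, Matrix.adjugate_fin_two, h1, h2] <;> try ring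

/-- The normalizer of the nonsplit Cartan subgroup:
matrices `[[a, bε], [b, a]]` together with matrices `[[a, bε], [-b, -a]]`. -/
def Nns (p : ℕ) (ε : ZMod p) : Subgroup (GL2 p) where
  carrier := { g | ((g : Matrix (Fin 2) (Fin 2) (ZMod p)) 1 1 =
      (g : Matrix (Fin 2) (Fin 2) (ZMod p)) 0 0 ∧
      (g : Matrix (Fin 2) (Fin 2) (ZMod p)) 0 1 = ε * (g : Matrix (Fin 2) (Fin 2) (ZMod p)) 1 0) ∨
      ((g : Matrix (Fin 2) (Fin 2) (ZMod p)) 1 1 =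
      -(g : Matrix (Fin 2) (Fin 2) (ZMod p)) 0 0 ∧
      (g : Matrix (Fin 2) (Fin 2) (ZMod p)) 0 1 =
        -(ε * (g : Matrix (Fin 2) (Fin 2) (ZMod p)) 1 0)) }
  one_mem' := by simp
  mul_mem' := by
    rintro a b (⟨ha1, ha2⟩ | ⟨ha1, ha2⟩) (⟨hb1, hb2⟩ | ⟨hb1, hb2⟩)
    · refine Or.inl ⟨?_, ?_⟩ <;>
        simp [Units.val_mul, Matrix.mul_apply, Fin.sum_univ_two, ha1, ha2, hb1, hb2] <;>
        try ring
    · refine Or.inr ⟨?_, ?_⟩ <;>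
        simp [Units.val_mul, Matrix.mul_apply, Fin.sum_univ_two, ha1, ha2, hb1, hb2] <;>
        try ring
    · refine Or.inr ⟨?_, ?_⟩ <;>
        simp [Units.val_mul, Matrix.mul_apply, Fin.sum_univ_two, ha1, ha2, hb1, hb2] <;>
        try ring
    · refine Or.inl ⟨?_, ?_⟩ <;>
        simp [Units.val_mul, Matrix.mul_apply, Fin.sum_univ_two, ha1, ha2, hb1, hb2] <;>
        try ring
  inv_mem' := by
    intro a h
    have hh : ((a⁻¹ : GL2 p) : Matrix (Fin 2) (Fin 2) (ZMod p))
        = Ring.inverse ((a : Matrix (Fin 2) (Fin 2) (ZMod p)).det) •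
          Matrix.adjugate (a : Matrix (Fin 2) (Fin 2) (ZMod p)) := by
      rw [Matrix.coe_units_inv, Matrix.inv_def]
    rcases h with ⟨h1, h2⟩ | ⟨h1, h2⟩
    · refine Or.inl ⟨?_, ?_⟩ <;> simp [hh, Matrix.adjugate_fin_two, h1, h2] <;> try ring
    · refine Or.inr ⟨?_, ?_⟩ <;> simp [hh, Matrix.adjugate_fin_two, h1, h2] <;> try ring
/-- The matrix `γ = [[1,1],[0,1]]` as an element of `GL₂(𝔽_p)`. -/
def gam (p : ℕ) : GL2 p where
  val := !![1, 1; 0, 1]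
  inv := !![1, -1; 0, 1]
  val_inv := by
    ext i j
    fin_cases i <;> fin_cases j <;>
      simp [Matrix.mul_apply, Fin.sum_univ_two, Matrix.one_apply]
  inv_val := by
    ext i j
    fin_cases i <;> fin_cases j <;>
      simp [Matrix.mul_apply, Fin.sum_univ_two, Matrix.one_apply]

/-- The diagonal matrix `diag(a, 1)` as an element of `GL₂(𝔽_p)`. -/
def dMat (p : ℕ) (a : (ZMod p)ˣ) : GL2 p where
  val := !![(a : ZMod p), 0; 0, 1]
  inv := !![((a⁻¹ : (ZMod p)ˣ) : ZMod p), 0; 0, 1]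
  val_inv := by
    ext i j
    fin_cases i <;> fin_cases j <;>
      simp [Matrix.mul_apply, Fin.sum_univ_two, Matrix.one_apply, ← Units.val_mul]
  inv_val := by
    ext i j
    fin_cases i <;> fin_cases j <;>
      simp [Matrix.mul_apply, Fin.sum_univ_two, Matrix.one_apply, ← Units.val_mul]

/-- `a ↦ diag(a, 1)` as a group homomorphism `𝔽_p^× → GL₂(𝔽_p)`. -/
def dHom (p : ℕ) : (ZMod p)ˣ →* GL2 p where
  toFun := dMat p
  map_one' := by
    refine Units.ext ?_
    simp only [dMat]
    ext i j
    fin_cases i <;> fin_cases j <;> simp [Matrix.one_apply]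
  map_mul' := by
    intro a b
    refine Units.ext ?_
    simp only [dMat, Units.val_mul]
    ext i j
    fin_cases i <;> fin_cases j <;> simp [Matrix.mul_apply, Fin.sum_univ_two]

/-- The semi-Cartan power subgroup `D^k = { diag(a^k, 1) : a ∈ 𝔽_p^× }`. -/
def Dpow (p k : ℕ) : Subgroup (GL2 p) :=
  ((dHom p).comp (powMonoidHom k)).range

/-- The diagonal matrix `diag(1, a)` as an element of `GL₂(𝔽_p)`. -/
def dMatF (p : ℕ) (a : (ZMod p)ˣ) : GL2 p where
  val := !![1, 0; 0, (a : ZMod p)]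
  inv := !![1, 0; 0, ((a⁻¹ : (ZMod p)ˣ) : ZMod p)]
  val_inv := by
    ext i j
    fin_cases i <;> fin_cases j <;>
      simp [Matrix.mul_apply, Fin.sum_univ_two, Matrix.one_apply, ← Units.val_mul]
  inv_val := by
    ext i j
    fin_cases i <;> fin_cases j <;>
      simp [Matrix.mul_apply, Fin.sum_univ_two, Matrix.one_apply, ← Units.val_mul]

/-- `a ↦ diag(1, a)` as a group homomorphism `𝔽_p^× → GL₂(𝔽_p)`. -/
def dHomF (p : ℕ) : (ZMod p)ˣ →* GL2 p where
  toFun := dMatF p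
  map_one' := by
    refine Units.ext ?_
    simp only [dMatF]
    ext i j
    fin_cases i <;> fin_cases j <;> simp [Matrix.one_apply]
  map_mul' := by
    intro a b
    refine Units.ext ?_
    simp only [dMatF, Units.val_mul]
    ext i j
    fin_cases i <;> fin_cases j <;> simp [Matrix.mul_apply, Fin.sum_univ_two]

/-- The flip `(D^k)_f = { diag(1, a^k) : a ∈ 𝔽_p^× }` of the semi-Cartan power subgroup. -/
def DpowF (p k : ℕ) : Subgroup (GL2 p) :=
  ((dHomF p).comp (powMonoidHom k)).range

/-- Any two elements of the nonsplit Cartan subgroup commute. -/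
lemma cns_comm {p : ℕ} {ε : ZMod p} {a b : GL2 p} (ha : a ∈ Cns p ε) (hb : b ∈ Cns p ε) :
    a * b = b * a := by
  obtain ⟨ha1, ha2⟩ := ha
  obtain ⟨hb1, hb2⟩ := hb
  refine Units.ext ?_
  ext i j
  fin_cases i <;> fin_cases j <;>
    · simp only [Units.val_mul]
      simp [Matrix.mul_apply, Fin.sum_univ_two, ha1, ha2, hb1, hb2]
      ring

/-- The subgroup `C_ns(p)^k` of `k`-th powers of elements of the nonsplit Cartan subgroup. -/
def CnsPow (p : ℕ) (ε : ZMod p) (k : ℕ) : Subgroup (GL2 p) where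
  carrier := { g | ∃ x ∈ Cns p ε, x ^ k = g }
  one_mem' := ⟨1, (Cns p ε).one_mem, one_pow k⟩
  mul_mem' := by
    rintro a b ⟨x, hx, rfl⟩ ⟨y, hy, rfl⟩
    exact ⟨x * y, (Cns p ε).mul_mem hx hy,
      Commute.mul_pow (cns_comm hx hy) k⟩
  inv_mem' := by
    rintro a ⟨x, hx, rfl⟩
    exact ⟨x⁻¹, (Cns p ε).inv_mem hx, by rw [inv_pow]⟩

/-- The conjugate subgroup `m H m⁻¹`. -/
def conjSub {p : ℕ} (m : GL2 p) (H : Subgroup (GL2 p)) : Subgroup (GL2 p) :=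
  Subgroup.map (MulAut.conj m).toMonoidHom H


lemma exists_pow_ne_one (p : ℕ) [Fact p.Prime] (k : ℕ) (hnd : ¬ (p - 1) ∣ k) :
    ∃ a : (ZMod p)ˣ, a ^ k ≠ 1 := by
  by_contra h
  push_neg at h
  obtain ⟨g, hg⟩ := IsCyclic.exists_generator (α := (ZMod p)ˣ)
  have h1 : orderOf g = p - 1 := by
    rw [orderOf_eq_card_of_forall_mem_zpowers hg, Nat.card_eq_fintype_card,
      ZMod.card_units_eq_totient, Nat.totient_prime Fact.out]
  exact hnd (h1 ▸ orderOf_dvd_of_pow_eq_one (h g))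

theorem stmt11 (p : ℕ) [Fact p.Prime] (hp2 : p ≠ 2)
    (k : ℕ) (hk : 1 ≤ k) (hnd : ¬ (p - 1) ∣ k)
    (G : Subgroup (GL2 p)) (hG : G ≤ Cs p)
    (hconj : ∃ m : GL2 p, conjSub m (Dpow p k) ≤ G) :
    Dpow p k ≤ G ∨ DpowF p k ≤ G := by
  obtain ⟨m, hm⟩ := hconj
  obtain ⟨a, ha⟩ := exists_pow_ne_one p k hnd
  set lam : (ZMod p)ˣ := a ^ k with hlam
  have hlv : (lam : ZMod p) ≠ 1 := fun h => ha (Units.ext h)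
  set d : GL2 p := dMat p lam with hd
  have hdmem : d ∈ Dpow p k := ⟨a, rfl⟩
  set n : GL2 p := (MulAut.conj m) d with hn
  have hnG : n ∈ G := hm ⟨d, hdmem, rfl⟩
  have hnCs : n ∈ Cs p := hG hnG
  obtain ⟨hn01, hn10⟩ := hnCs
  have hnm : n * m = m * d := by
    rw [hn, MulAut.conj_apply]
    group
  have key : ((n : GL2 p) : Matrix (Fin 2) (Fin 2) (ZMod p)) *
      ((m : GL2 p) : Matrix (Fin 2) (Fin 2) (ZMod p)) =
      ((m : GL2 p) : Matrix (Fin 2) (Fin 2) (ZMod p)) *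
      ((d : GL2 p) : Matrix (Fin 2) (Fin 2) (ZMod p)) := by
    rw [← Units.val_mul, ← Units.val_mul, hnm]
  set M : Matrix (Fin 2) (Fin 2) (ZMod p) := ((m : GL2 p) : Matrix (Fin 2) (Fin 2) (ZMod p))
    with hM
  have hdval : ((d : GL2 p) : Matrix (Fin 2) (Fin 2) (ZMod p)) = !![(lam : ZMod p), 0; 0, 1] :=
    rfl
  have e00 : ((n : GL2 p) : Matrix (Fin 2) (Fin 2) (ZMod p)) 0 0 * M 0 0 = M 0 0 * lam := by
    have := congrFun (congrFun key 0) 0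
    simpa [Matrix.mul_apply, Fin.sum_univ_two, hn01, hdval] using this
  have e01 : ((n : GL2 p) : Matrix (Fin 2) (Fin 2) (ZMod p)) 0 0 * M 0 1 = M 0 1 := by
    have := congrFun (congrFun key 0) 1
    simpa [Matrix.mul_apply, Fin.sum_univ_two, hn01, hdval] using this
  have e10 : ((n : GL2 p) : Matrix (Fin 2) (Fin 2) (ZMod p)) 1 1 * M 1 0 = M 1 0 * lam := by
    have := congrFun (congrFun key 1) 0
    simpa [Matrix.mul_apply, Fin.sum_univ_two, hn10, hdval] using this
  have e11 : ((n : GL2 p) : Matrix (Fin 2) (Fin 2) (ZMod p)) 1 1 * M 1 1 = M 1 1 := by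
    have := congrFun (congrFun key 1) 1
    simpa [Matrix.mul_apply, Fin.sum_univ_two, hn10, hdval] using this
  have hdet : M 0 0 * M 1 1 - M 0 1 * M 1 0 ≠ 0 := by
    have h1 : IsUnit M.det := (Matrix.isUnit_iff_isUnit_det M).mp (Units.isUnit m)
    rw [Matrix.det_fin_two] at h1
    exact h1.ne_zero
  -- case split on whether M 0 0 = 0
  by_cases h00 : M 0 0 = 0
  · -- antidiagonal case: M 1 1 = 0
    have h01 : M 0 1 ≠ 0 := by
      intro h; apply hdet; simp [h00, h]
    have h10 : M 1 0 ≠ 0 := by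
      intro h; apply hdet; simp [h00, h]
    have hn00 : ((n : GL2 p) : Matrix (Fin 2) (Fin 2) (ZMod p)) 0 0 = 1 := by
      rcases mul_eq_mul_right_iff.mp (e01.trans (one_mul _).symm) with h | h
      · exact h
      · exact absurd h h01
    have hn11 : ((n : GL2 p) : Matrix (Fin 2) (Fin 2) (ZMod p)) 1 1 = lam := by
      rcases mul_eq_mul_right_iff.mp (e10.trans (mul_comm _ _)) with h | h
      · exact h
      · exact absurd h h10
    have h11 : M 1 1 = 0 := by
      rw [hn11] at e11
      rcases mul_eq_mul_right_iff.mp (e11.trans (one_mul _).symm) with h | h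
      · exact absurd h hlv
      · exact h
    -- now m is antidiagonal; conjugation sends dMat u to dMatF u
    right
    rintro g ⟨x, rfl⟩
    have hc : (MulAut.conj m) (dMat p (x ^ k)) = dMatF p (x ^ k) := by
      rw [MulAut.conj_apply, mul_inv_eq_iff_eq_mul]
      refine Units.ext ?_
      rw [Units.val_mul, Units.val_mul]
      ext i j
      fin_cases i <;> fin_cases j <;>
        simp [dMat, dMatF, Matrix.mul_apply, Fin.sum_univ_two, ← hM, h00, h11, mul_comm]
    have := hm ⟨dMat p (x ^ k), ⟨x, rfl⟩, rfl⟩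
    rw [MulEquiv.coe_toMonoidHom] at this
    rw [show ((dHomF p).comp (powMonoidHom k)) x = dMatF p (x ^ k) from rfl, ← hc]
    exact this
  · -- M 0 0 ≠ 0 : diagonal case
    have hn00 : ((n : GL2 p) : Matrix (Fin 2) (Fin 2) (ZMod p)) 0 0 = lam := by
      rcases mul_eq_mul_right_iff.mp (e00.trans (mul_comm _ _)) with h | h
      · exact h
      · exact absurd h h00
    have h01 : M 0 1 = 0 := by
      rw [hn00] at e01
      rcases mul_eq_mul_right_iff.mp (e01.trans (one_mul _).symm) with h | h
      · exact absurd h hlv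
      · exact h
    have h10 : M 1 0 = 0 := by
      by_contra h
      have hn11 : ((n : GL2 p) : Matrix (Fin 2) (Fin 2) (ZMod p)) 1 1 = lam := by
        rcases mul_eq_mul_right_iff.mp (e10.trans (mul_comm _ _)) with h2 | h2
        · exact h2
        · exact absurd h2 h
      have h11 : M 1 1 = 0 := by
        rw [hn11] at e11
        rcases mul_eq_mul_right_iff.mp (e11.trans (one_mul _).symm) with h2 | h2
        · exact absurd h2 hlv
        · exact h2
      exact hdet (by simp [h01, h11])
    left
    rintro g ⟨x, rfl⟩
    have hc : (MulAut.conj m) (dMat p (x ^ k)) = dMat p (x ^ k) := by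
      rw [MulAut.conj_apply, mul_inv_eq_iff_eq_mul]
      refine Units.ext ?_
      rw [Units.val_mul, Units.val_mul]
      ext i j
      fin_cases i <;> fin_cases j <;>
        simp [dMat, Matrix.mul_apply, Fin.sum_univ_two, ← hM, h01, h10, mul_comm]
    have := hm ⟨dMat p (x ^ k), ⟨x, rfl⟩, rfl⟩
    rw [MulEquiv.coe_toMonoidHom] at this
    rw [show ((dHom p).comp (powMonoidHom k)) x = dMat p (x ^ k) from rfl, ← hc]
    exact this
end

section
/- Let p be an odd prime and k ≥ 1 an integer. If there exists m ∈ GL₂(𝔽_p) such that m D^k m⁻¹ ⊆ N_s(p) but m D^k m⁻¹ is not contained in C_s(p), then p − 1 divides 2k. -/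
open Matrix

theorem stmt12 (p : ℕ) [Fact p.Prime] (hp2 : p ≠ 2)
    (k : ℕ) (hk : 1 ≤ k)
    (hconj : ∃ m : GL2 p, conjSub m (Dpow p k) ≤ Ns p ∧ ¬ conjSub m (Dpow p k) ≤ Cs p) :
    (p - 1) ∣ 2 * k := by
  obtain ⟨m, h1, h2⟩ := hconj
  obtain ⟨g, hg⟩ := IsCyclic.exists_generator (α := (ZMod p)ˣ)
  set δ : GL2 p := m * dMat p (g ^ k) * m⁻¹ with hδdef
  have hδmem : δ ∈ conjSub m (Dpow p k) := ⟨dHom p (g ^ k), ⟨g, rfl⟩, rfl⟩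
  -- δ is not in Cs
  have hδCs : δ ∉ Cs p := by
    intro hC
    apply h2
    rintro x ⟨y, ⟨a, rfl⟩, rfl⟩
    obtain ⟨n, rfl⟩ := hg a
    have hpk : (g ^ n) ^ k = (g ^ k) ^ n := by
      rw [← zpow_natCast (g ^ n) k, ← _root_.zpow_mul, mul_comm, _root_.zpow_mul, zpow_natCast]
    have hy : ((dHom p).comp (powMonoidHom k)) (g ^ n) = (dHom p (g ^ k)) ^ n := by
      show dHom p ((g ^ n) ^ k) = _
      rw [hpk, map_zpow]
    rw [hy, map_zpow]
    exact Subgroup.zpow_mem _ hC n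
  have hδNs : δ ∈ Ns p := h1 hδmem
  have hanti : (δ : Matrix (Fin 2) (Fin 2) (ZMod p)) 0 0 = 0 ∧
      (δ : Matrix (Fin 2) (Fin 2) (ZMod p)) 1 1 = 0 := by
    rcases hδNs with h | h
    · exact absurd h hδCs
    · exact h
  set c : ZMod p := (δ : Matrix (Fin 2) (Fin 2) (ZMod p)) 0 1 * (δ : Matrix (Fin 2) (Fin 2) (ZMod p)) 1 0 with hc
  have hsq : ((δ * δ : GL2 p) : Matrix (Fin 2) (Fin 2) (ZMod p)) = c • (1 : Matrix (Fin 2) (Fin 2) (ZMod p)) := by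
    ext i j
    fin_cases i <;> fin_cases j <;>
      simp [Units.val_mul, Matrix.mul_apply, Fin.sum_univ_two, Matrix.one_apply,
        hanti.1, hanti.2, hc, mul_comm]
  have hgrp : dMat p (g ^ k) * dMat p (g ^ k) = m⁻¹ * (δ * δ) * m := by
    rw [hδdef]; group
  have hval : ((dMat p (g ^ k) * dMat p (g ^ k) : GL2 p) : Matrix (Fin 2) (Fin 2) (ZMod p))
      = c • (1 : Matrix (Fin 2) (Fin 2) (ZMod p)) := by
    rw [hgrp]
    calc ((m⁻¹ * (δ * δ) * m : GL2 p) : Matrix (Fin 2) (Fin 2) (ZMod p))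
        = (m⁻¹ : GL2 p).val * ((δ * δ : GL2 p) : Matrix (Fin 2) (Fin 2) (ZMod p)) * (m : GL2 p).val := by
          simp [Units.val_mul, Matrix.mul_assoc]
      _ = c • ((m⁻¹ : GL2 p).val * (m : GL2 p).val) := by
          rw [hsq, Matrix.mul_smul, Matrix.smul_mul, Matrix.mul_one]
      _ = c • (1 : Matrix (Fin 2) (Fin 2) (ZMod p)) := by
          rw [← Units.val_mul, inv_mul_cancel, Units.val_one]
  have h00 : ((g : ZMod p) ^ k) * ((g : ZMod p) ^ k) = c := by
    have := congrFun (congrFun hval 0) 0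
    simpa [dMat, Units.val_mul, Matrix.mul_apply, Fin.sum_univ_two, Matrix.one_apply] using this
  have h11 : (1 : ZMod p) = c := by
    have := congrFun (congrFun hval 1) 1
    simpa [dMat, Units.val_mul, Matrix.mul_apply, Fin.sum_univ_two, Matrix.one_apply] using this
  have hpow : g ^ (2 * k) = 1 := by
    refine Units.ext ?_
    push_cast [Units.val_pow_eq_pow_val]
    rw [two_mul, pow_add, h00, ← h11]
  have hord : orderOf g ∣ 2 * k := orderOf_dvd_of_pow_eq_one hpow
  have hcard : orderOf g = p - 1 := by
    rw [orderOf_eq_card_of_forall_mem_zpowers hg]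
    have := ZMod.card_units_eq_totient p
    rw [Nat.card_eq_fintype_card, this, Nat.totient_prime (Fact.out : p.Prime)]
  rwa [hcard] at hord
end

section
/- Let p be an odd prime and k ≥ 1 an integer. If some GL₂(𝔽_p)-conjugate of D^k is contained in C_ns(p), then p − 1 divides k; and if some GL₂(𝔽_p)-conjugate of D^k is contained in N_ns(p), then p − 1 divides 2k. -/
open Matrix

/-- If `ε` is a nonsquare and `s ^ 2 = ε * u ^ 2`, then `s = 0`. -/
lemma sq_eq_nonsq {p : ℕ} [Fact p.Prime] {ε s u : ZMod p} (hε : ∀ x : ZMod p, x ^ 2 ≠ ε)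
    (h : s ^ 2 = ε * u ^ 2) : s = 0 := by
  by_cases hu : u = 0
  · subst hu
    have : s ^ 2 = 0 := by simpa using h
    exact (pow_eq_zero_iff two_ne_zero).mp this
  · exact absurd (show (s * u⁻¹) ^ 2 = ε by field_simp; linear_combination h) (hε _)

lemma conj_trace {p : ℕ} (m x : GL2 p) :
    Matrix.trace ((↑(m * x * m⁻¹) : Matrix (Fin 2) (Fin 2) (ZMod p))) =
    Matrix.trace ((x : Matrix (Fin 2) (Fin 2) (ZMod p))) := by
  simp only [Units.val_mul]
  rw [Matrix.trace_mul_comm, ← mul_assoc, ← Units.val_mul, inv_mul_cancel]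
  simp

lemma conj_det {p : ℕ} (m x : GL2 p) :
    Matrix.det ((↑(m * x * m⁻¹) : Matrix (Fin 2) (Fin 2) (ZMod p))) =
    Matrix.det ((x : Matrix (Fin 2) (Fin 2) (ZMod p))) := by
  simp only [Units.val_mul, Matrix.det_mul]
  have h : Matrix.det ((m : Matrix (Fin 2) (Fin 2) (ZMod p))) *
      Matrix.det ((↑(m⁻¹) : Matrix (Fin 2) (Fin 2) (ZMod p))) = 1 := by
    rw [← Matrix.det_mul, ← Units.val_mul, mul_inv_cancel]
    simp
  calc Matrix.det (m : Matrix (Fin 2) (Fin 2) (ZMod p)) *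
        Matrix.det (x : Matrix (Fin 2) (Fin 2) (ZMod p)) *
        Matrix.det ((↑(m⁻¹) : Matrix (Fin 2) (Fin 2) (ZMod p)))
      = Matrix.det (x : Matrix (Fin 2) (Fin 2) (ZMod p)) *
        (Matrix.det (m : Matrix (Fin 2) (Fin 2) (ZMod p)) *
        Matrix.det ((↑(m⁻¹) : Matrix (Fin 2) (Fin 2) (ZMod p)))) := by ring
    _ = _ := by rw [h, mul_one]

lemma dMat_trace {p : ℕ} (b : (ZMod p)ˣ) :
    Matrix.trace ((dMat p b : GL2 p) : Matrix (Fin 2) (Fin 2) (ZMod p)) = (b : ZMod p) + 1 := by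
  simp [dMat, Matrix.trace_fin_two]

lemma dMat_det {p : ℕ} (b : (ZMod p)ˣ) :
    Matrix.det ((dMat p b : GL2 p) : Matrix (Fin 2) (Fin 2) (ZMod p)) = (b : ZMod p) := by
  simp [dMat, Matrix.det_fin_two]

lemma core_cns {p : ℕ} [Fact p.Prime] {ε : ZMod p} (hε : ∀ x : ZMod p, x ^ 2 ≠ ε)
    {m : GL2 p} {b : (ZMod p)ˣ} (h : m * dMat p b * m⁻¹ ∈ Cns p ε) : (b : ZMod p) = 1 := by
  obtain ⟨h1, h2⟩ := h
  set Y := ((m * dMat p b * m⁻¹ : GL2 p) : Matrix (Fin 2) (Fin 2) (ZMod p)) with hY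
  have htr : Y 0 0 + Y 1 1 = (b : ZMod p) + 1 := by
    have := conj_trace m (dMat p b)
    rw [dMat_trace] at this
    rw [← this, ← hY, Matrix.trace_fin_two]
  have hdet : Y 0 0 * Y 1 1 - Y 0 1 * Y 1 0 = (b : ZMod p) := by
    have := conj_det m (dMat p b)
    rw [dMat_det] at this
    rw [← this, ← hY, Matrix.det_fin_two]
  rw [h1] at htr hdet
  rw [h2] at hdet
  have hsq : ((b : ZMod p) - 1) ^ 2 = ε * (2 * Y 1 0) ^ 2 := by
    linear_combination (-(2 * Y 0 0 + (b : ZMod p) + 1)) * htr + 4 * hdet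
  have := sq_eq_nonsq hε hsq
  linear_combination this

lemma core_nns {p : ℕ} [Fact p.Prime] {ε : ZMod p} (hε : ∀ x : ZMod p, x ^ 2 ≠ ε)
    {m : GL2 p} {b : (ZMod p)ˣ} (h : m * dMat p b * m⁻¹ ∈ Nns p ε) :
    (b : ZMod p) ^ 2 = 1 := by
  rcases h with ⟨h1, h2⟩ | ⟨h1, h2⟩
  · have := core_cns hε ⟨h1, h2⟩
    rw [this]; ring
  · set Y := ((m * dMat p b * m⁻¹ : GL2 p) : Matrix (Fin 2) (Fin 2) (ZMod p)) with hY
    have htr : Y 0 0 + Y 1 1 = (b : ZMod p) + 1 := by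
      have := conj_trace m (dMat p b)
      rw [dMat_trace] at this
      rw [← this, ← hY, Matrix.trace_fin_two]
    rw [h1] at htr
    have hb : (b : ZMod p) = -1 := by linear_combination -htr
    rw [hb]; ring

lemma dMat_mem_Dpow {p k : ℕ} (a : (ZMod p)ˣ) : dMat p (a ^ k) ∈ Dpow p k := ⟨a, rfl⟩

lemma conj_mem {p : ℕ} (m : GL2 p) {H G : Subgroup (GL2 p)} (hle : conjSub m H ≤ G)
    {x : GL2 p} (hx : x ∈ H) : m * x * m⁻¹ ∈ G := by
  exact hle ⟨x, hx, rfl⟩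

theorem stmt13 (p : ℕ) [Fact p.Prime] (hp2 : p ≠ 2)
    (k : ℕ) (hk : 1 ≤ k)
    (ε : ZMod p) (hε : ∀ x : ZMod p, x ^ 2 ≠ ε) :
    ((∃ m : GL2 p, conjSub m (Dpow p k) ≤ Cns p ε) → (p - 1) ∣ k) ∧
    ((∃ m : GL2 p, conjSub m (Dpow p k) ≤ Nns p ε) → (p - 1) ∣ 2 * k) := by
  obtain ⟨g, hg⟩ := IsCyclic.exists_generator (α := (ZMod p)ˣ)
  have hord : orderOf g = p - 1 := by
    rw [orderOf_eq_card_of_forall_mem_zpowers hg, Nat.card_eq_fintype_card, ZMod.card_units_eq_totient,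
      Nat.totient_prime (Fact.out : p.Prime)]
  constructor
  · rintro ⟨m, hm⟩
    have key : g ^ k = 1 := by
      have h := conj_mem m hm (dMat_mem_Dpow (k := k) g)
      have := core_cns hε h
      exact Units.ext (by simpa using this)
    exact hord ▸ orderOf_dvd_of_pow_eq_one key
  · rintro ⟨m, hm⟩
    have key : g ^ (2 * k) = 1 := by
      have h := conj_mem m hm (dMat_mem_Dpow (k := k) g)
      have h2 := core_nns hε h
      refine Units.ext ?_
      push_cast
      rw [mul_comm 2 k, pow_mul]
      simpa using h2
    exact hord ▸ orderOf_dvd_of_pow_eq_one key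
end

section
/- Let p be an odd prime and k ≥ 1 an integer. If some GL₂(𝔽_p)-conjugate of C_ns(p)^k is contained in the subgroup ⟨γ, Z(p)⟩ generated by γ and the scalar matrices, then p + 1 divides gcd(k, p² − 1). -/
open Matrix

/-! A conjugate of `C_ns(p)^k` inside `⟨γ, Z(p)⟩` lies in the Borel subgroup, and the
discriminant `tr² - 4 det`, being a conjugation invariant, is a square on the Borel subgroup but
equals `4εb²` on `[[a, bε], [b, a]]`; hence every `k`-th power in `C_ns(p)` is scalar, so has
order dividing `p - 1`. Since `C_ns(p) ≅ 𝔽_{p²}^×` is cyclic of order `p² - 1`, this forces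
`p² - 1 ∣ k (p - 1)`. -/

namespace Matrix

section Discriminant

variable {R : Type*} [CommRing R]

lemma trace_sq_sub_four_mul_det_units_conj {n : Type*} [Fintype n] [DecidableEq n]
    (m : GL n R) (M : Matrix n n R) :
    trace (m.val * M * m⁻¹.val) ^ 2 - 4 * det (m.val * M * m⁻¹.val) =
      trace M ^ 2 - 4 * det M := by
  rw [trace_units_conj, det_units_conj]

lemma trace_sq_sub_four_mul_det_of_apply_one_zero {N : Matrix (Fin 2) (Fin 2) R}
    (h : N 1 0 = 0) : trace N ^ 2 - 4 * det N = (N 0 0 - N 1 1) ^ 2 := by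
  rw [trace_fin_two, det_fin_two, h]
  ring

lemma trace_sq_sub_four_mul_det_of_cns {ε : R} {M : Matrix (Fin 2) (Fin 2) R}
    (h₁ : M 1 1 = M 0 0) (h₀ : M 0 1 = ε * M 1 0) :
    trace M ^ 2 - 4 * det M = ε * (2 * M 1 0) ^ 2 := by
  rw [trace_fin_two, det_fin_two, h₁, h₀]
  ring

end Discriminant

end Matrix

section CnsSubring

variable (K : Type*) [CommRing K] (ε : K)

def cnsSubring : Subring (Matrix (Fin 2) (Fin 2) K) where
  carrier := { M | M 1 1 = M 0 0 ∧ M 0 1 = ε * M 1 0 }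
  zero_mem' := by simp
  one_mem' := by simp
  add_mem' := by
    rintro A B ⟨hA₁, hA₀⟩ ⟨hB₁, hB₀⟩
    exact ⟨by simp [hA₁, hB₁], by simp [hA₀, hB₀, mul_add]⟩
  neg_mem' := by
    rintro A ⟨h₁, h₀⟩
    exact ⟨by simp [h₁], by simp [h₀]⟩
  mul_mem' := by
    rintro A B ⟨hA₁, hA₀⟩ ⟨hB₁, hB₀⟩
    constructor <;> simp only [mul_apply, Fin.sum_univ_two, hA₁, hA₀, hB₁, hB₀] <;> ring

def cnsSubringEquivProd : cnsSubring K ε ≃ K × K where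
  toFun M := (M.1 0 0, M.1 1 0)
  invFun x := ⟨!![x.1, ε * x.2; x.2, x.1], rfl, rfl⟩
  left_inv := by
    rintro ⟨M, h₁, h₀⟩
    ext i j
    fin_cases i <;> fin_cases j <;> simp [h₁, h₀]
  right_inv x := rfl

lemma nat_card_cnsSubring : Nat.card (cnsSubring K ε) = Nat.card K ^ 2 := by
  rw [Nat.card_congr (cnsSubringEquivProd K ε), Nat.card_prod, sq]

end CnsSubring

section Nonsquare

variable {K : Type*} [Field K] {ε : K}

lemma eq_zero_of_sq_eq_mul_sq (hε : ∀ x : K, x ^ 2 ≠ ε) {s b : K}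
    (h : s ^ 2 = ε * b ^ 2) : b = 0 := by
  by_contra hb
  exact hε (s / b) (by field_simp; linear_combination h)

lemma Matrix.apply_one_zero_eq_zero_of_conj_upperTriangular (h2 : (2 : K) ≠ 0)
    (hε : ∀ x : K, x ^ 2 ≠ ε) {M : Matrix (Fin 2) (Fin 2) K}
    (h₁ : M 1 1 = M 0 0) (h₀ : M 0 1 = ε * M 1 0) (m : GL (Fin 2) K)
    (hm : (m.val * M * m⁻¹.val) 1 0 = 0) : M 1 0 = 0 := by
  have hdisc := trace_sq_sub_four_mul_det_units_conj m M
  rw [trace_sq_sub_four_mul_det_of_apply_one_zero hm, trace_sq_sub_four_mul_det_of_cns h₁ h₀]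
    at hdisc
  simpa [h2] using eq_zero_of_sq_eq_mul_sq hε hdisc

lemma eq_zero_of_mem_cnsSubring_of_det_eq_zero (hε : ∀ x : K, x ^ 2 ≠ ε)
    {M : Matrix (Fin 2) (Fin 2) K} (hM : M ∈ cnsSubring K ε) (hdet : det M = 0) : M = 0 := by
  obtain ⟨h₁, h₀⟩ := hM
  rw [det_fin_two, h₁, h₀] at hdet
  have hb : M 1 0 = 0 := eq_zero_of_sq_eq_mul_sq hε (s := M 0 0) (by linear_combination hdet)
  have ha : M 0 0 = 0 := by simpa [hb] using hdet
  ext i j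
  fin_cases i <;> fin_cases j <;> simp [h₁, h₀, ha, hb]

lemma noZeroDivisors_cnsSubring (hε : ∀ x : K, x ^ 2 ≠ ε) :
    NoZeroDivisors (cnsSubring K ε) where
  eq_zero_or_eq_zero_of_mul_eq_zero {A B} h := by
    have hdet : det A.1 * det B.1 = 0 := by
      rw [← det_mul, ← Subring.coe_mul, h, Subring.coe_zero, det_zero]
    refine (mul_eq_zero.mp hdet).imp (fun hA => ?_) (fun hB => ?_)
    · exact Subtype.ext (eq_zero_of_mem_cnsSubring_of_det_eq_zero hε A.2 hA)
    · exact Subtype.ext (eq_zero_of_mem_cnsSubring_of_det_eq_zero hε B.2 hB)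

-- Commutativity of `cnsSubring` comes for free from Wedderburn's little theorem.
lemma isField_cnsSubring [Finite K] (hε : ∀ x : K, x ^ 2 ≠ ε) : IsField (cnsSubring K ε) :=
  haveI := noZeroDivisors_cnsSubring hε
  haveI := NoZeroDivisors.to_isDomain (cnsSubring K ε)
  Finite.isDomain_to_isField _

end Nonsquare

lemma exists_mem_Cns_orderOf_eq {p : ℕ} [Fact p.Prime] {ε : ZMod p}
    (hε : ∀ x : ZMod p, x ^ 2 ≠ ε) : ∃ g ∈ Cns p ε, orderOf g = p ^ 2 - 1 := by
  let _ : Field (cnsSubring (ZMod p) ε) := (isField_cnsSubring hε).toField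
  obtain ⟨u, hu⟩ := IsCyclic.exists_ofOrder_eq_natCard (α := (cnsSubring (ZMod p) ε)ˣ)
  let ι := Units.map (cnsSubring (ZMod p) ε).subtype.toMonoidHom
  refine ⟨ι u, u.1.2, ?_⟩
  rw [orderOf_injective ι (Units.map_injective Subtype.val_injective) u, hu, Nat.card_units,
    nat_card_cnsSubring, Nat.card_zmod]

lemma mem_Zs_of_mem_Cns_of_conj_mem_B0 {p : ℕ} [Fact p.Prime] (hp2 : p ≠ 2) {ε : ZMod p}
    (hε : ∀ x : ZMod p, x ^ 2 ≠ ε) {g m : GL2 p} (hg : g ∈ Cns p ε)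
    (hm : m * g * m⁻¹ ∈ B0 p) :
    g ∈ Zs p := by
  obtain ⟨h₁, h₀⟩ := hg
  have h2 : (2 : ZMod p) ≠ 0 := Ring.two_ne_zero (by rwa [ZMod.ringChar_zmod_n])
  have hb := apply_one_zero_eq_zero_of_conj_upperTriangular h2 hε h₁ h₀ m hm
  exact ⟨by rw [h₀, hb, mul_zero], hb, h₁⟩

lemma CnsPow_le_Zs_of_conjSub_le_B0 {p : ℕ} [Fact p.Prime] (hp2 : p ≠ 2) {ε : ZMod p}
    (hε : ∀ x : ZMod p, x ^ 2 ≠ ε) {k : ℕ} {m : GL2 p}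
    (hm : conjSub m (CnsPow p ε k) ≤ B0 p) :
    CnsPow p ε k ≤ Zs p := by
  rintro _ ⟨x, hx, rfl⟩
  exact mem_Zs_of_mem_Cns_of_conj_mem_B0 hp2 hε (pow_mem hx k)
    (hm (Subgroup.mem_map_of_mem _ ⟨x, hx, rfl⟩))

lemma closure_gam_union_Zs_le_B0 (p : ℕ) :
    Subgroup.closure ({gam p} ∪ (Zs p : Set (GL2 p))) ≤ B0 p := by
  rw [Subgroup.closure_le]
  rintro g (rfl | hg)
  · rfl
  · exact hg.2.1

lemma pow_sub_one_eq_one_of_mem_Zs {p : ℕ} [Fact p.Prime] {g : GL2 p} (hg : g ∈ Zs p) :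
    g ^ (p - 1) = 1 := by
  obtain ⟨h₀₁, h₁₀, h₁₁⟩ := hg
  have hscalar : (g : Matrix (Fin 2) (Fin 2) (ZMod p)) = scalar (Fin 2) (g.1 0 0) := by
    ext i j
    fin_cases i <;> fin_cases j <;> simp [h₀₁, h₁₀, h₁₁]
  have hc : g.1 0 0 ≠ 0 := by
    intro hc
    have hdet := (isUnits_det_units g).ne_zero
    rw [det_fin_two, h₀₁, h₁₀, h₁₁, hc] at hdet
    simp at hdet
  ext : 1
  rw [Units.val_pow_eq_pow_val, hscalar, ← map_pow, ZMod.pow_card_sub_one_eq_one hc, map_one,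
    Units.val_one]

theorem stmt14_general (p : ℕ) [Fact p.Prime] (hp2 : p ≠ 2)
    (k : ℕ)
    (ε : ZMod p) (hε : ∀ x : ZMod p, x ^ 2 ≠ ε)
    (hconj : ∃ m : GL2 p,
      conjSub m (CnsPow p ε k) ≤ Subgroup.closure ({gam p} ∪ (↑(Zs p) : Set (GL2 p)))) :
    (p + 1) ∣ Nat.gcd k (p ^ 2 - 1) := by
  obtain ⟨m, hm⟩ := hconj
  have hscalar := CnsPow_le_Zs_of_conjSub_le_B0 hp2 hε (hm.trans (closure_gam_union_Zs_le_B0 p))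
  obtain ⟨g, hg, hord⟩ := exists_mem_Cns_orderOf_eq hε
  have hdvd : p ^ 2 - 1 ∣ k * (p - 1) := hord ▸ orderOf_dvd_of_pow_eq_one <| by
    rw [pow_mul]
    exact pow_sub_one_eq_one_of_mem_Zs (hscalar ⟨g, hg, rfl⟩)
  have hfac : p ^ 2 - 1 = (p + 1) * (p - 1) := by simpa using Nat.sq_sub_sq p 1
  rw [hfac] at hdvd
  have hpos : 0 < p - 1 := Nat.sub_pos_of_lt (Fact.out : p.Prime).one_lt
  exact Nat.dvd_gcd (Nat.dvd_of_mul_dvd_mul_right hpos hdvd) (hfac ▸ dvd_mul_right _ _)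

theorem stmt14 (p : ℕ) [Fact p.Prime] (hp2 : p ≠ 2)
    (k : ℕ) (hk : 1 ≤ k)
    (ε : ZMod p) (hε : ∀ x : ZMod p, x ^ 2 ≠ ε)
    (hconj : ∃ m : GL2 p,
      conjSub m (CnsPow p ε k) ≤ Subgroup.closure ({gam p} ∪ (↑(Zs p) : Set (GL2 p)))) :
    (p + 1) ∣ Nat.gcd k (p ^ 2 - 1) :=
  stmt14_general p hp2 k ε hε hconj
end

section
/- Let p be an odd prime and fix a non-square ε ∈ 𝔽_p^×. The normalizer of the nonsplit Cartan subgroup C_ns(p) in GL₂(𝔽_p) is exactly C_ns(p) ∪ { [[a, bε],[-b, -a]] : (a,b) ∈ 𝔽_p² \ {(0,0)} }, i.e. it equals C_ns(p) ∪ [[1,0],[0,-1]]·C_ns(p). -/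
open Matrix

/-!
Let `J = [[0, ε], [1, 0]]` be the matrix of multiplication by `√ε`; then `C_ns(p)` is the
centralizer of `J` in `GL₂(𝔽_p)`. If `g` normalizes it, then `gJg⁻¹` lies in `C_ns(p)` and has
trace `0` and determinant `-ε`; writing it as `[[a, bε], [b, a]]` this forces `a = 0` and `b² = 1`,
i.e. `gJg⁻¹ = ±J`. The sign `+` means `g` commutes with `J`, so `g ∈ C_ns(p)`, and the sign `-`
gives exactly the matrices `[[a, bε], [-b, -a]]`. Conversely, conjugation by such `g` maps the
centralizer of `J` to that of `±J`, which is the same group since `-1` is central.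
-/

theorem Subgroup.mem_normalizer_centralizer_singleton_of_conj_eq_or_eq_neg {G : Type*} [Group G]
    [HasDistribNeg G] {g x : G} (h : g * x * g⁻¹ = x ∨ g * x * g⁻¹ = -x) :
    g ∈ Subgroup.normalizer (Subgroup.centralizer {x} : Set G) := by
  refine Subgroup.mem_normalizer_iff.mpr fun n => ?_
  simp only [Subgroup.mem_centralizer_singleton_iff, ← commute_iff_eq]
  have hconj : Commute n x ↔ Commute (g * n * g⁻¹) (g * x * g⁻¹) :=
    (commute_map_iff (f := MulAut.conj g) (MulAut.conj g).injective).symm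
  rcases h with h | h <;> rw [hconj, h]
  exact Commute.neg_right_iff

namespace Matrix

variable {R : Type*} [CommRing R]

def mulSqrt (ε : R) : Matrix (Fin 2) (Fin 2) R := !![0, ε; 1, 0]

theorem det_mulSqrt (ε : R) : (mulSqrt ε).det = -ε := by
  simp [mulSqrt, det_fin_two]

theorem mul_mulSqrt_eq_iff (ε : R) (M : Matrix (Fin 2) (Fin 2) R) :
    M * mulSqrt ε = mulSqrt ε * M ↔ M 1 1 = M 0 0 ∧ M 0 1 = ε * M 1 0 := by
  rw [← Matrix.ext_iff, Fin.forall_fin_two, Fin.forall_fin_two, Fin.forall_fin_two]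
  simp only [mul_apply, Fin.sum_univ_two, mulSqrt, of_apply, cons_val', cons_val_zero, cons_val_one,
    cons_val_fin_one, mul_zero, zero_mul, mul_one, one_mul, zero_add, add_zero]
  constructor
  · rintro ⟨⟨h01, -⟩, h11, -⟩
    exact ⟨h11, h01⟩
  · rintro ⟨h11, h01⟩
    exact ⟨⟨h01, by rw [h11]; ring⟩, h11, by rw [h01]; ring⟩

theorem mul_mulSqrt_eq_neg_iff (ε : R) (M : Matrix (Fin 2) (Fin 2) R) :
    M * mulSqrt ε = -(mulSqrt ε * M) ↔ M 1 1 = -M 0 0 ∧ M 0 1 = -(ε * M 1 0) := by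
  rw [← Matrix.ext_iff, Fin.forall_fin_two, Fin.forall_fin_two, Fin.forall_fin_two]
  simp only [neg_apply, mul_apply, Fin.sum_univ_two, mulSqrt, of_apply, cons_val', cons_val_zero, cons_val_one,
    cons_val_fin_one, mul_zero, zero_mul, mul_one, one_mul, zero_add, add_zero]
  constructor
  · rintro ⟨⟨h01, -⟩, h11, -⟩
    exact ⟨h11, h01⟩
  · rintro ⟨h11, h01⟩
    exact ⟨⟨h01, by rw [h11]; ring⟩, h11, by rw [h01]; ring⟩

theorem eq_mulSqrt_or_eq_neg_of_commute [IsDomain R] {ε : R} (h2 : (2 : R) ≠ 0) (hε : ε ≠ 0)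
    {M : Matrix (Fin 2) (Fin 2) R} (hcomm : M * mulSqrt ε = mulSqrt ε * M)
    (htr : M.trace = (mulSqrt ε).trace) (hdet : M.det = (mulSqrt ε).det) :
    M = mulSqrt ε ∨ M = -mulSqrt ε := by
  obtain ⟨h11, h01⟩ := (mul_mulSqrt_eq_iff ε M).mp hcomm
  have h00 : M 0 0 = 0 := by
    rw [trace_fin_two, trace_fin_two, h11, ← two_mul] at htr
    simpa [mulSqrt, h2] using htr
  have h10 : M 1 0 ^ 2 = 1 := by
    rw [det_fin_two, h11, h01, h00, det_mulSqrt] at hdet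
    apply mul_left_cancel₀ hε
    linear_combination -hdet
  rw [M.eta_fin_two, h11, h01, h00]
  rcases sq_eq_one_iff.mp h10 with h | h <;> rw [h]
  · exact Or.inl (by simp [mulSqrt])
  · exact Or.inr (by ext i j; fin_cases i <;> fin_cases j <;> simp [mulSqrt])

variable {K : Type*} [Field K] {ε : K}

def mulSqrtUnit (hε : ε ≠ 0) : GL (Fin 2) K :=
  GeneralLinearGroup.mkOfDetNeZero (Matrix.mulSqrt ε) (by rwa [det_mulSqrt, neg_ne_zero])

theorem val_mulSqrtUnit (hε : ε ≠ 0) : (mulSqrtUnit hε : Matrix (Fin 2) (Fin 2) K) = mulSqrt ε :=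
  rfl

theorem conj_mulSqrtUnit_eq_or_eq_neg (h2 : (2 : K) ≠ 0) (hε : ε ≠ 0) {g : GL (Fin 2) K}
    (hg : g ∈ Subgroup.normalizer (Subgroup.centralizer {mulSqrtUnit hε} : Set (GL (Fin 2) K))) :
    g * mulSqrtUnit hε * g⁻¹ = mulSqrtUnit hε ∨ g * mulSqrtUnit hε * g⁻¹ = -mulSqrtUnit hε := by
  have hmem : g * mulSqrtUnit hε * g⁻¹ ∈ Subgroup.centralizer {mulSqrtUnit hε} :=
    (Subgroup.mem_normalizer_iff.mp hg _).mp (Subgroup.mem_centralizer_singleton_iff.mpr rfl)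
  have hcomm := congrArg Units.val (Subgroup.mem_centralizer_singleton_iff.mp hmem)
  simp only [Units.ext_iff, Units.val_neg]
  exact eq_mulSqrt_or_eq_neg_of_commute h2 hε hcomm (trace_units_conj g _)
    (det_units_conj g _)

end Matrix

open Matrix in
theorem Cns_eq_centralizer_mulSqrtUnit {p : ℕ} [Fact p.Prime] {ε : ZMod p} (hε : ε ≠ 0) :
    Cns p ε = Subgroup.centralizer {mulSqrtUnit hε} := by
  ext g
  rw [Subgroup.mem_centralizer_singleton_iff, Units.ext_iff, Units.val_mul, Units.val_mul,
    val_mulSqrtUnit, mul_mulSqrt_eq_iff]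
  rfl

open Matrix in
theorem mem_Nns_iff_conj_mulSqrtUnit {p : ℕ} [Fact p.Prime] {ε : ZMod p} (hε : ε ≠ 0)
    (g : GL2 p) :
    g ∈ Nns p ε ↔
      g * mulSqrtUnit hε * g⁻¹ = mulSqrtUnit hε ∨ g * mulSqrtUnit hε * g⁻¹ = -mulSqrtUnit hε := by
  simp only [mul_inv_eq_iff_eq_mul, neg_mul, Units.ext_iff, Units.val_mul, Units.val_neg,
    val_mulSqrtUnit, mul_mulSqrt_eq_iff, mul_mulSqrt_eq_neg_iff]
  rfl

theorem stmt18 (p : ℕ) [Fact p.Prime] (hp2 : p ≠ 2)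
    (ε : ZMod p) (hε : ∀ x : ZMod p, x ^ 2 ≠ ε) :
    Subgroup.normalizer (Cns p ε : Set (GL2 p)) = Nns p ε := by
  have hε0 : ε ≠ 0 := fun h => hε 0 (by simp [h])
  have h2 : (2 : ZMod p) ≠ 0 := Ring.two_ne_zero (by rwa [ZMod.ringChar_zmod_n])
  ext g
  rw [Cns_eq_centralizer_mulSqrtUnit hε0, mem_Nns_iff_conj_mulSqrtUnit hε0]
  exact ⟨conj_mulSqrtUnit_eq_or_eq_neg h2 hε0,
    Subgroup.mem_normalizer_centralizer_singleton_of_conj_eq_or_eq_neg⟩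
end
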